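/- Let p ≥ 1 and let G be a graph with α(G) ≥ 2. Then G belongs to W_p if and only if for every vertex x of G, the localization G_x belongs to W_p and α(G_x) = α(G) − 1. -/

import Mathlib

/-!
Forward direction: disjoint independent sets of `G_x` extend to disjoint maximum independent
sets of `G`; choose such an extension minimising the total size of its traces on `N[x]`. A
maximum independent set always meets `N[x]`, and a member meeting it twice can be exchanged for
one meeting it only in `x` (re-extend the parts outside `N[x]`, with `x` added to that member),
which lowers the total. So every trace is a single vertex, and deleting `N[x]` leaves disjoint
independent sets of `G_x` of size `α(G) - 1`, which is therefore `α(G_x)`.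

Backward direction: take a maximal family of disjoint independent sets extending the given one.
If a member `A_j` were not maximum, localise at a vertex `x ∈ A_j` (any vertex if `A_j = ∅`):
the parts of the members outside `N[x]` extend in `G_x` to disjoint sets of size
`α(G) - 1 > |A_j \ N[x]|`, and a vertex of the `j`-th extension outside `A_j` can be added to
`A_j`.
-/

open Classical

noncomputable section

variable {V : Type*}

/-- `s` is an independent set of `G`. -/
def IndepSet (G : SimpleGraph V) (s : Set V) : Prop :=
  ∀ ⦃a⦄, a ∈ s → ∀ ⦃b⦄, b ∈ s → ¬ G.Adj a b

/-- The independence number `α(G)`. -/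
def alphaNum [Fintype V] (G : SimpleGraph V) : ℕ :=
  sSup {n | ∃ s : Set V, IndepSet G s ∧ s.ncard = n}

/-- `s` is a maximal independent set of `G`. -/
def MaximalIndep (G : SimpleGraph V) (s : Set V) : Prop :=
  IndepSet G s ∧ ∀ t : Set V, IndepSet G t → s ⊆ t → s = t

/-- `G` is well-covered: all maximal independent sets have cardinality `α(G)`. -/
def WellCovered [Fintype V] (G : SimpleGraph V) : Prop :=
  ∀ s : Set V, MaximalIndep G s → s.ncard = alphaNum G

/-- The open neighborhood `N_G(S)` of a set of vertices. -/
def openNbhd (G : SimpleGraph V) (S : Set V) : Set V :=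
  {v | v ∉ S ∧ ∃ u ∈ S, G.Adj u v}

/-- The closed neighborhood `N_G[S]`. -/
def closedNbhd (G : SimpleGraph V) (S : Set V) : Set V :=
  S ∪ openNbhd G S

/-- The vertex set of the localization `G_S = G - N_G[S]`. -/
def localSet (G : SimpleGraph V) (S : Set V) : Set V :=
  (closedNbhd G S)ᶜ

/-- `G` belongs to the class `W_p`. -/
def Wp (p : ℕ) [Fintype V] (G : SimpleGraph V) : Prop :=
  p ≤ Fintype.card V ∧
    ∀ A : Fin p → Set V,
      (∀ i, IndepSet G (A i)) →
      (∀ i j, i ≠ j → Disjoint (A i) (A j)) →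
      ∃ S : Fin p → Set V,
        (∀ i j, i ≠ j → Disjoint (S i) (S j)) ∧
        (∀ i, IndepSet G (S i) ∧ (S i).ncard = alphaNum G) ∧
        (∀ i, A i ⊆ S i)

/-- `G` is `α`-critical: deleting any edge increases the independence number. -/
def AlphaCritical [Fintype V] (G : SimpleGraph V) : Prop :=
  ∀ a b : V, G.Adj a b → alphaNum G < alphaNum (G.deleteEdges {s(a, b)})

/-- The vertex set of `G_{ab} = G - (N_G(a) ∪ N_G(b))`. -/
def edgeLocalSet (G : SimpleGraph V) (a b : V) : Set V :=
  (G.neighborSet a ∪ G.neighborSet b)ᶜ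

open Set

section Basic

variable {G : SimpleGraph V} {s t U : Set V} {x : V}

theorem IndepSet.mono (h : s ⊆ t) (ht : IndepSet G t) : IndepSet G s :=
  fun _ ha _ hb => ht (h ha) (h hb)

theorem mem_localSet_singleton {v : V} : v ∈ localSet G {x} ↔ v ≠ x ∧ ¬ G.Adj x v := by
  simp only [localSet, closedNbhd, openNbhd, mem_compl_iff, mem_union, mem_singleton_iff,
    mem_ofPred_eq, exists_eq_left, not_or, not_and]
  tauto

theorem self_mem_closedNbhd_singleton : x ∈ closedNbhd G {x} :=
  Or.inl rfl

theorem IndepSet.insert_of_subset_localSet (hs : IndepSet G s) (hsx : s ⊆ localSet G {x}) :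
    IndepSet G (insert x s) := by
  rintro a (rfl | ha) b (rfl | hb) hab
  · exact G.irrefl hab
  · exact (mem_localSet_singleton.1 (hsx hb)).2 hab
  · exact (mem_localSet_singleton.1 (hsx ha)).2 hab.symm
  · exact hs ha hb hab

theorem IndepSet.inter_closedNbhd_singleton (hs : IndepSet G s) (hx : x ∈ s) :
    s ∩ closedNbhd G {x} = {x} := by
  refine subset_antisymm (fun v ⟨hv, hvx⟩ => ?_) (singleton_subset_iff.2 ⟨hx, Or.inl rfl⟩)
  by_contra hne
  exact (mem_localSet_singleton.2 ⟨hne, hs hx hv⟩) hvx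

theorem indepSet_induce_iff {t : Set U} :
    IndepSet (G.induce U) t ↔ IndepSet G (Subtype.val '' t) := by
  constructor
  · rintro h _ ⟨a, ha, rfl⟩ _ ⟨b, hb, rfl⟩ hab
    exact h ha hb (by simpa using hab)
  · intro h a ha b hb hab
    exact h ⟨a, ha, rfl⟩ ⟨b, hb, rfl⟩ (by simpa using hab)

theorem image_val_preimage_val (h : s ⊆ U) :
    Subtype.val '' (Subtype.val ⁻¹' s : Set U) = s := by
  rw [Subtype.image_preimage_coe, inter_eq_right.2 h]

theorem ncard_preimage_val (h : s ⊆ U) : (Subtype.val ⁻¹' s : Set U).ncard = s.ncard :=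
  ncard_preimage_of_injective_subset_range Subtype.val_injective (by rwa [Subtype.range_coe])

end Basic

section AlphaNum

variable [Fintype V] {G : SimpleGraph V} {s U : Set V} {x : V}

theorem bddAbove_ncard_indepSet (G : SimpleGraph V) :
    BddAbove {n | ∃ s : Set V, IndepSet G s ∧ s.ncard = n} :=
  ⟨Fintype.card V, by
    rintro _ ⟨s, -, rfl⟩
    exact (ncard_le_card s).trans_eq Nat.card_eq_fintype_card⟩

theorem IndepSet.ncard_le_alphaNum (hs : IndepSet G s) : s.ncard ≤ alphaNum G :=
  le_csSup (bddAbove_ncard_indepSet G) ⟨s, hs, rfl⟩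

theorem exists_indepSet_ncard_eq_alphaNum (G : SimpleGraph V) :
    ∃ s, IndepSet G s ∧ s.ncard = alphaNum G :=
  Nat.sSup_mem (s := {n | ∃ s : Set V, IndepSet G s ∧ s.ncard = n})
    ⟨0, ∅, fun _ h => absurd h (notMem_empty _), ncard_empty V⟩ (bddAbove_ncard_indepSet G)

theorem nonempty_of_alphaNum_pos (h : 0 < alphaNum G) : Nonempty V := by
  obtain ⟨s, -, hs⟩ := exists_indepSet_ncard_eq_alphaNum G
  obtain ⟨v, -⟩ := nonempty_of_ncard_ne_zero (s := s) (by omega)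
  exact ⟨v⟩

theorem IndepSet.ncard_le_alphaNum_induce (hs : IndepSet G s) (hsU : s ⊆ U) :
    s.ncard ≤ alphaNum (G.induce U) := by
  rw [← ncard_preimage_val hsU]
  exact (indepSet_induce_iff.2 (by rwa [image_val_preimage_val hsU])).ncard_le_alphaNum

theorem alphaNum_induce_localSet_lt : alphaNum (G.induce (localSet G {x})) < alphaNum G := by
  obtain ⟨t, ht, hcard⟩ := exists_indepSet_ncard_eq_alphaNum (G.induce (localSet G {x}))
  have htx : Subtype.val '' t ⊆ localSet G {x} := image_subset_iff.2 fun v _ => v.2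
  have hx : x ∉ Subtype.val '' t := fun hx => (mem_localSet_singleton.1 (htx hx)).1 rfl
  have := ((indepSet_induce_iff.1 ht).insert_of_subset_localSet htx).ncard_le_alphaNum
  rw [ncard_insert_of_notMem hx, ncard_image_of_injective _ Subtype.val_injective, hcard] at this
  omega

theorem IndepSet.nonempty_inter_closedNbhd (hs : IndepSet G s) (hmax : s.ncard = alphaNum G) :
    (s ∩ closedNbhd G {x}).Nonempty := by
  by_contra hempty
  have hsx : s ⊆ localSet G {x} := subset_compl_iff_disjoint_right.2
    (disjoint_iff_inter_eq_empty.2 (not_nonempty_iff_eq_empty.1 hempty))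
  have hx : x ∉ s := fun hx => hsx hx self_mem_closedNbhd_singleton
  have := (hs.insert_of_subset_localSet hsx).ncard_le_alphaNum
  rw [ncard_insert_of_notMem hx, hmax] at this
  omega

end AlphaNum

section Packing

variable {ι : Type*} {G : SimpleGraph V} {S T A : ι → Set V} {U : Set V}

structure IsIndepPacking (G : SimpleGraph V) (S : ι → Set V) : Prop where
  disjoint : ∀ i j, i ≠ j → Disjoint (S i) (S j)
  indep : ∀ i, IndepSet G (S i)

def packingExtensions (G : SimpleGraph V) (U : Set V) (k : ℕ) (A : ι → Set V) :
    Set (ι → Set V) :=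
  {T | IsIndepPacking G T ∧ ∀ i, A i ⊆ T i ∧ T i ⊆ U ∧ (T i).ncard = k}

theorem IsIndepPacking.mono (hT : IsIndepPacking G T) (h : ∀ i, S i ⊆ T i) :
    IsIndepPacking G S :=
  ⟨fun i j hij => (hT.disjoint i j hij).mono (h i) (h j), fun i => (hT.indep i).mono (h i)⟩

theorem subset_update_insert [DecidableEq ι] (S : ι → Set V) (j : ι) (v : V) (i : ι) :
    S i ⊆ Function.update S j (insert v (S j)) i := by
  rcases eq_or_ne i j with rfl | hij
  · simp
  · simp [hij]

theorem IsIndepPacking.update_insert [DecidableEq ι] {j : ι} {v : V} (hS : IsIndepPacking G S)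
    (hv : ∀ i, v ∉ S i) (hvj : IndepSet G (insert v (S j))) :
    IsIndepPacking G (Function.update S j (insert v (S j))) := by
  have key : ∀ i, i ≠ j → Disjoint (insert v (S j)) (S i) := fun i hij =>
    disjoint_insert_left.2 ⟨hv i, hS.disjoint j i hij.symm⟩
  refine ⟨fun i i' hii' => ?_, fun i => ?_⟩
  · rcases eq_or_ne i j with rfl | hi
    · simpa [hii'.symm] using key i' hii'.symm
    · rcases eq_or_ne i' j with rfl | hi'
      · simpa [hi] using (key i hi).symm
      · simpa [hi, hi'] using hS.disjoint i i' hii'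
  · rcases eq_or_ne i j with rfl | hi
    · simpa using hvj
    · simpa [hi] using hS.indep i

theorem card_le_card_of_disjoint_nonempty [Fintype ι] [Fintype U]
    (hd : ∀ i j, i ≠ j → Disjoint (T i) (T j)) (hne : ∀ i, (T i).Nonempty)
    (hU : ∀ i, T i ⊆ U) : Fintype.card ι ≤ Fintype.card U := by
  refine Fintype.card_le_of_injective (fun i => ⟨(hne i).some, hU i (hne i).some_mem⟩)
    fun i j hij => by_contra fun hne' => disjoint_left.1 (hd i j hne') (hne i).some_mem ?_
  rw [show (hne i).some = (hne j).some from Subtype.ext_iff.1 hij]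
  exact (hne j).some_mem

end Packing

section Wp

variable [Fintype V] {G : SimpleGraph V} {U : Set V} {p : ℕ}

theorem wp_iff : Wp p G ↔ p ≤ Fintype.card V ∧ ∀ A : Fin p → Set V,
    IsIndepPacking G A → (packingExtensions G univ (alphaNum G) A).Nonempty := by
  refine and_congr_right fun _ => forall_congr' fun A => ⟨fun h hA => ?_, fun h hi hd => ?_⟩
  · obtain ⟨S, hd, hS, hAS⟩ := h hA.indep hA.disjoint
    exact ⟨S, ⟨hd, fun i => (hS i).1⟩, fun i => ⟨hAS i, subset_univ _, (hS i).2⟩⟩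
  · obtain ⟨S, hS, hAS⟩ := h ⟨hd, hi⟩
    exact ⟨S, hS.disjoint, fun i => ⟨hS.indep i, (hAS i).2.2⟩, fun i => (hAS i).1⟩

theorem wp_induce_iff : Wp p (G.induce U) ↔ p ≤ Fintype.card U ∧ ∀ A : Fin p → Set V,
    (∀ i, A i ⊆ U) → IsIndepPacking G A →
      (packingExtensions G U (alphaNum (G.induce U)) A).Nonempty := by
  refine and_congr_right fun _ => ⟨fun h A hAU hA => ?_, fun h A hAi hAd => ?_⟩
  · obtain ⟨T, hTd, hT, hAT⟩ := h (fun i => Subtype.val ⁻¹' A i)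
      (fun i => indepSet_induce_iff.2 (by rw [image_val_preimage_val (hAU i)]; exact hA.indep i))
      (fun i j hij => (hA.disjoint i j hij).preimage _)
    refine ⟨fun i => Subtype.val '' T i,
      ⟨fun i j hij => (disjoint_image_iff Subtype.val_injective).2 (hTd i j hij),
        fun i => indepSet_induce_iff.1 (hT i).1⟩, fun i => ⟨?_, ?_, ?_⟩⟩
    · rw [← image_val_preimage_val (hAU i)]
      exact image_mono (hAT i)
    · exact image_subset_iff.2 fun v _ => v.2
    · rw [ncard_image_of_injective _ Subtype.val_injective, (hT i).2]
  · obtain ⟨T, hT, hAT⟩ := h (fun i => Subtype.val '' A i)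
      (fun i => image_subset_iff.2 fun v _ => v.2)
      ⟨fun i j hij => (disjoint_image_iff Subtype.val_injective).2 (hAd i j hij),
        fun i => indepSet_induce_iff.1 (hAi i)⟩
    refine ⟨fun i => Subtype.val ⁻¹' T i, fun i j hij => (hT.disjoint i j hij).preimage _,
      fun i => ⟨?_, ?_⟩, fun i a ha => (hAT i).1 ⟨a, ha, rfl⟩⟩
    · rw [indepSet_induce_iff, image_val_preimage_val (hAT i).2.1]
      exact hT.indep i
    · rw [ncard_preimage_val (hAT i).2.1, (hAT i).2.2]

end Wp

theorem ncard_inter_le_of_sdiff_subset [Finite V] {s t K : Set V} (h : s \ K ⊆ t)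
    (hc : t.ncard = s.ncard) : (t ∩ K).ncard ≤ (s ∩ K).ncard := by
  have hs := ncard_inter_add_ncard_sdiff_eq_ncard s K
  have ht := ncard_inter_add_ncard_sdiff_eq_ncard t K
  have hst := ncard_le_ncard (subset_sdiff.2 ⟨h, disjoint_sdiff_left⟩ : s \ K ⊆ t \ K)
  omega

section LocalSet

variable [Fintype V] {G : SimpleGraph V} {p : ℕ} {x : V} {A : Fin p → Set V}

theorem Wp.exists_lt_of_one_lt_ncard_inter (hW : Wp p G) (hAx : ∀ i, A i ⊆ localSet G {x})
    {S : Fin p → Set V} (hS : S ∈ packingExtensions G univ (alphaNum G) A) {j : Fin p}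
    (hj : 1 < (S j ∩ closedNbhd G {x}).ncard) :
    ∃ R ∈ packingExtensions G univ (alphaNum G) A,
      ∑ i, (R i ∩ closedNbhd G {x}).ncard < ∑ i, (S i ∩ closedNbhd G {x}).ncard := by
  set K := closedNbhd G {x}
  obtain ⟨hS, hAS⟩ := hS
  set B : Fin p → Set V := fun i => S i \ K
  have hB : IsIndepPacking G B := hS.mono fun i => sdiff_subset
  have hxB : ∀ i, x ∉ B i := fun i hx => hx.2 self_mem_closedNbhd_singleton
  have hxBj : IndepSet G (insert x (B j)) :=
    (hB.indep j).insert_of_subset_localSet fun v hv => hv.2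
  obtain ⟨R, hR, hER⟩ := (wp_iff.1 hW).2 _ (hB.update_insert hxB hxBj)
  have hBR : ∀ i, B i ⊆ R i := fun i => (subset_update_insert B j x i).trans (hER i).1
  have hRK : R j ∩ K = {x} :=
    (hR.indep j).inter_closedNbhd_singleton ((hER j).1 (by simp))
  refine ⟨R, ⟨hR, fun i => ⟨?_, subset_univ _, (hER i).2.2⟩⟩, Finset.sum_lt_sum
    (fun i _ => ncard_inter_le_of_sdiff_subset (hBR i) ((hER i).2.2.trans (hAS i).2.2.symm))
    ⟨j, Finset.mem_univ j, by rwa [hRK, ncard_singleton]⟩⟩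
  exact (subset_sdiff.2 ⟨(hAS i).1, subset_compl_iff_disjoint_right.1 (hAx i)⟩).trans (hBR i)

theorem Wp.packingExtensions_localSet_nonempty (hW : Wp p G) (hAx : ∀ i, A i ⊆ localSet G {x})
    (hA : IsIndepPacking G A) :
    (packingExtensions G (localSet G {x}) (alphaNum G - 1) A).Nonempty := by
  set K := closedNbhd G {x}
  obtain ⟨S, hS, hSmin⟩ := exists_min_image (packingExtensions G univ (alphaNum G) A)
    (fun S => ∑ i, (S i ∩ K).ncard) (toFinite _) ((wp_iff.1 hW).2 A hA)
  have hSK : ∀ i, (S i ∩ K).ncard = 1 := by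
    intro j
    have hpos : 0 < (S j ∩ K).ncard :=
      ((hS.1.indep j).nonempty_inter_closedNbhd (hS.2 j).2.2).ncard_pos
    by_contra hne
    obtain ⟨R, hR, hlt⟩ := hW.exists_lt_of_one_lt_ncard_inter hAx hS (j := j)
      (show 1 < (S j ∩ K).ncard by omega)
    exact (hSmin R hR).not_gt hlt
  refine ⟨fun i => S i \ K, hS.1.mono fun i => sdiff_subset,
    fun i => ⟨?_, fun v hv => hv.2, ?_⟩⟩
  · exact subset_sdiff.2 ⟨(hS.2 i).1, subset_compl_iff_disjoint_right.1 (hAx i)⟩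
  · show (S i \ K).ncard = alphaNum G - 1
    have := ncard_inter_add_ncard_sdiff_eq_ncard (S i) K
    rw [hSK i, (hS.2 i).2.2] at this
    omega

theorem exists_insert_indepSet_of_ncard_lt (halpha : 2 ≤ alphaNum G)
    (hloc : ∀ x : V, Wp p (G.induce (localSet G {x})) ∧
      alphaNum (G.induce (localSet G {x})) = alphaNum G - 1)
    (hA : IsIndepPacking G A) {j : Fin p} (hj : (A j).ncard < alphaNum G) :
    ∃ v, (∀ i, v ∉ A i) ∧ IndepSet G (insert v (A j)) := by
  obtain ⟨x, hAjx, hBj⟩ : ∃ x, A j ⊆ insert x (A j \ closedNbhd G {x}) ∧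
      (A j \ closedNbhd G {x}).ncard < alphaNum G - 1 := by
    rcases (A j).eq_empty_or_nonempty with hempty | ⟨x, hx⟩
    · obtain ⟨x⟩ := nonempty_of_alphaNum_pos (G := G) (by omega)
      exact ⟨x, by simp [hempty], by simp [hempty]; omega⟩
    · have hK := (hA.indep j).inter_closedNbhd_singleton hx
      refine ⟨x, fun v hv => ?_, ?_⟩
      · by_cases hvK : v ∈ closedNbhd G {x}
        · have hvx : v ∈ A j ∩ closedNbhd G {x} := ⟨hv, hvK⟩
          rw [hK] at hvx
          exact Or.inl hvx
        · exact Or.inr ⟨hv, hvK⟩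
      · have := ncard_inter_add_ncard_sdiff_eq_ncard (A j) (closedNbhd G {x})
        rw [hK, ncard_singleton] at this
        omega
  set K := closedNbhd G {x}
  obtain ⟨T, hT, hAT⟩ := (wp_induce_iff.1 (hloc x).1).2 (fun i => A i \ K)
    (fun i v hv => hv.2) (hA.mono fun i => sdiff_subset)
  obtain ⟨v, hvT, hvB⟩ :=
    exists_mem_notMem_of_ncard_lt_ncard (hBj.trans_eq ((hAT j).2.2.trans (hloc x).2).symm)
  have hvK : v ∉ K := (hAT j).2.1 hvT
  refine ⟨v, fun i hvi => ?_, ?_⟩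
  · rcases eq_or_ne i j with rfl | hij
    · exact hvB ⟨hvi, hvK⟩
    · exact disjoint_left.1 (hT.disjoint i j hij) ((hAT i).1 ⟨hvi, hvK⟩) hvT
  · refine ((hT.indep j).insert_of_subset_localSet (hAT j).2.1).mono ?_
    exact insert_subset (mem_insert_of_mem x hvT)
      (hAjx.trans (insert_subset_insert (hAT j).1))

theorem packingExtensions_nonempty_of_localSet (halpha : 2 ≤ alphaNum G)
    (hloc : ∀ x : V, Wp p (G.induce (localSet G {x})) ∧
      alphaNum (G.induce (localSet G {x})) = alphaNum G - 1)
    (hA : IsIndepPacking G A) : (packingExtensions G univ (alphaNum G) A).Nonempty := by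
  obtain ⟨S, hAS, hSmax⟩ :=
    Finite.exists_le_maximal (p := fun S => IsIndepPacking G S ∧ A ≤ S) ⟨hA, le_rfl⟩
  refine ⟨S, hSmax.prop.1, fun i => ⟨hAS i, subset_univ _, ?_⟩⟩
  refine le_antisymm (hSmax.prop.1.indep i).ncard_le_alphaNum (not_lt.1 fun hlt => ?_)
  obtain ⟨v, hv, hvS⟩ := exists_insert_indepSet_of_ncard_lt halpha hloc hSmax.prop.1 hlt
  have hle := hSmax.le_of_ge ⟨hSmax.prop.1.update_insert hv hvS,
    hSmax.prop.2.trans (subset_update_insert S i v)⟩ (subset_update_insert S i v)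
  exact hv i (hle i (by simp))

end LocalSet

theorem stmt17 [Fintype V] (G : SimpleGraph V) (p : ℕ) (hp : 1 ≤ p)
    (halpha : 2 ≤ alphaNum G) :
    Wp p G ↔
      ∀ x : V, Wp p (G.induce (localSet G {x})) ∧
        alphaNum (G.induce (localSet G {x})) = alphaNum G - 1 := by
  constructor
  · intro hW x
    obtain ⟨T, hT, hT'⟩ := hW.packingExtensions_localSet_nonempty (x := x) (A := fun _ => ∅)
      (fun _ => empty_subset _)
      ⟨fun _ _ _ => disjoint_bot_left, fun _ _ h => absurd h (notMem_empty _)⟩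
    have hα : alphaNum (G.induce (localSet G {x})) = alphaNum G - 1 := by
      have hle := alphaNum_induce_localSet_lt (G := G) (x := x)
      have hge := (hT.indep ⟨0, hp⟩).ncard_le_alphaNum_induce (hT' ⟨0, hp⟩).2.1
      rw [(hT' ⟨0, hp⟩).2.2] at hge
      omega
    have hcard : p ≤ Fintype.card (localSet G {x}) := by
      simpa using card_le_card_of_disjoint_nonempty hT.disjoint
        (fun i => nonempty_of_ncard_ne_zero (by rw [(hT' i).2.2]; omega)) fun i => (hT' i).2.1
    refine ⟨wp_induce_iff.2 ⟨hcard, fun A hAx hA => ?_⟩, hα⟩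
    rw [hα]
    exact hW.packingExtensions_localSet_nonempty hAx hA
  · intro hloc
    obtain ⟨x⟩ := nonempty_of_alphaNum_pos (G := G) (by omega)
    exact wp_iff.2 ⟨(hloc x).1.1.trans (Fintype.card_le_of_injective _ Subtype.val_injective),
      fun A hA => packingExtensions_nonempty_of_localSet halpha hloc hA⟩
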